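/- For the bi-periodic Lucas sequence and all n ≥ 1, (b/a)^(1−ε(n)) l_{n+1} l_{n−1} − (b/a)^(ε(n)) l_n² = (ab + 4)·(−1)^(n+1), where ε(n) is the parity of n. -/

import Mathlib

/-- Bi-periodic Fibonacci sequence: q 0 = 0, q 1 = 1,
    q n = a * q (n-1) + q (n-2) if n even, q n = b * q (n-1) + q (n-2) if n odd. -/
def bpFib (a b : ℝ) : ℕ → ℝ
  | 0 => 0
  | 1 => 1
  | n + 2 => (if Even (n + 2) then a else b) * bpFib a b (n + 1) + bpFib a b n

/-- Bi-periodic Lucas sequence: l 0 = 2, l 1 = a,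
    l n = b * l (n-1) + l (n-2) if n even, l n = a * l (n-1) + l (n-2) if n odd. -/
def bpLucas (a b : ℝ) : ℕ → ℝ
  | 0 => 2
  | 1 => a
  | n + 2 => (if Even (n + 2) then b else a) * bpLucas a b (n + 1) + bpLucas a b n

/-!
Write `c n` for the coefficient (`b` for even `n`, `a` for odd `n`) with which the recurrence
produces `l n`. Clearing the denominator `a`, the identity becomes the division-free
`c (n+1) l (n+2) l n - c n l (n+1)² = a (ab + 4) (-1)ⁿ`. Substituting the recurrence for
`l (n+3)` and `l (n+2)` shows that this quantity changes sign from `n` to `n + 1`, and at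
`n = 0` it equals `a (ab + 4)`.
-/

namespace BpLucas

variable (a b : ℝ)

def coeff (n : ℕ) : ℝ := if Even n then b else a

@[simp]
theorem coeff_add_two (n : ℕ) : coeff a b (n + 2) = coeff a b n := by
  simp [coeff, Nat.even_add]

theorem bpLucas_add_two (n : ℕ) :
    bpLucas a b (n + 2) = coeff a b n * bpLucas a b (n + 1) + bpLucas a b n := by
  rw [bpLucas, ← coeff, coeff_add_two]

theorem coeff_mul_sub_coeff_mul_sq (n : ℕ) :
    coeff a b (n + 1) * bpLucas a b (n + 2) * bpLucas a b n -
      coeff a b n * bpLucas a b (n + 1) ^ 2 = a * (a * b + 4) * (-1) ^ n := by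
  induction n with
  | zero => simp only [coeff, bpLucas]; norm_num; ring
  | succ n ih =>
    have hrec : bpLucas a b (n + 3) =
        coeff a b (n + 1) * bpLucas a b (n + 2) + bpLucas a b (n + 1) :=
      bpLucas_add_two a b (n + 1)
    rw [coeff_add_two, pow_succ]
    linear_combination (-1 : ℝ) * ih + coeff a b n * bpLucas a b (n + 1) * hrec
      - coeff a b (n + 1) * bpLucas a b (n + 2) * bpLucas_add_two a b n

variable {a}

theorem coeff_div (ha : a ≠ 0) (n : ℕ) : coeff a b n / a = (b / a) ^ (1 - n % 2) := by
  rcases Nat.even_or_odd n with hn | hn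
  · simp [coeff, hn, Nat.even_iff.mp hn]
  · simp [coeff, Nat.not_even_iff_odd.mpr hn, Nat.odd_iff.mp hn, ha]

theorem coeff_succ_div (ha : a ≠ 0) (n : ℕ) : coeff a b (n + 1) / a = (b / a) ^ (n % 2) := by
  rcases Nat.even_or_odd n with hn | hn
  · simp [coeff, Nat.not_even_iff_odd.mpr hn.add_one, Nat.even_iff.mp hn, ha]
  · simp [coeff, hn.add_one, Nat.odd_iff.mp hn]

end BpLucas

theorem bpLucas_cassini (a b : ℝ) (ha : a ≠ 0) (n : ℕ) (hn : 1 ≤ n) :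
    (b / a) ^ (1 - n % 2) * bpLucas a b (n + 1) * bpLucas a b (n - 1) -
      (b / a) ^ (n % 2) * (bpLucas a b n) ^ 2 = (a * b + 4) * (-1 : ℝ) ^ (n + 1) := by
  obtain ⟨m, rfl⟩ : ∃ m, n = m + 1 := ⟨n - 1, by omega⟩
  have hc := BpLucas.coeff_mul_sub_coeff_mul_sq a b m
  rw [← BpLucas.coeff_div b ha, ← BpLucas.coeff_succ_div b ha, BpLucas.coeff_add_two,
    Nat.add_sub_cancel, pow_succ, pow_succ]
  field_simp
  linear_combination hc
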